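/- (Observation 3) Let f be a Boolean network on n+2 components such that for every i among the first n coordinates, f_i(x) = (φ'(x restricted to first n coordinates) ∧ ¬ x_{n+1}) ∨ x_{n+2}, for some Boolean function φ' : B^n → B. If T is a trap space of f whose last two coordinates are free (T(n+1) = T(n+2) = none), then all coordinates of T are free: T i = none for all i. -/

import Mathlib

/-! The local function of each of the first `n` coordinates is forced to `false` where
`x_{n+1} = true, x_{n+2} = false` and to `true` where `x_{n+2} = true`. A trap space whose last two
coordinates are free contains configurations of both kinds, so no other coordinate of it can be fixed. -/

def vset {n : ℕ} (h : Fin n → Option Bool) : Set (Fin n → Bool) :=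
  { x | ∀ i b, h i = some b → x i = b }

def IsTrap {n : ℕ} (f : (Fin n → Bool) → (Fin n → Bool)) (h : Fin n → Option Bool) : Prop :=
  ∀ x ∈ vset h, f x ∈ vset h

def IsMinTrap {n : ℕ} (f : (Fin n → Bool) → (Fin n → Bool)) (h : Fin n → Option Bool) : Prop :=
  IsTrap f h ∧ ∀ h' : Fin n → Option Bool, IsTrap f h' → ¬ (vset h' ⊂ vset h)

section TrapSpace

variable {n : ℕ} {T : Fin n → Option Bool}

lemma getD_mem_vset (b : Bool) : (fun k => (T k).getD b) ∈ vset T := by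
  intro k c hc
  simp [hc]

lemma update_mem_vset {x : Fin n → Bool} (hx : x ∈ vset T) {k : Fin n} (hk : T k = none)
    (b : Bool) : Function.update x k b ∈ vset T := by
  intro i c hc
  have hik : i ≠ k := by rintro rfl; simp [hk] at hc
  rw [Function.update_of_ne hik]
  exact hx i c hc

lemma exists_mem_vset_apply_eq_apply_eq {i₁ i₂ : Fin n} (h₁ : T i₁ = none) (h₂ : T i₂ = none)
    (hne : i₁ ≠ i₂) (b₁ b₂ : Bool) : ∃ x ∈ vset T, x i₁ = b₁ ∧ x i₂ = b₂ :=
  ⟨_, update_mem_vset (update_mem_vset (getD_mem_vset false) h₁ b₁) h₂ b₂,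
    by simp [Function.update_of_ne hne], by simp⟩

lemma IsTrap.eq_none_of_apply_ne {f : (Fin n → Bool) → (Fin n → Bool)} (hT : IsTrap f T)
    {x y : Fin n → Bool} (hx : x ∈ vset T) (hy : y ∈ vset T) {i : Fin n} (hxy : f x i ≠ f y i) :
    T i = none := by
  cases hi : T i with
  | none => rfl
  | some b => exact absurd ((hT x hx i b hi).trans (hT y hy i b hi).symm) hxy

end TrapSpace

theorem stmt_13 {n : ℕ} (f : (Fin (n+2) → Bool) → (Fin (n+2) → Bool))
    (φ' : (Fin n → Bool) → Bool)
    (i₁ : Fin (n+2)) (i₂ : Fin (n+2)) (hi₁ : (i₁ : ℕ) = n) (hi₂ : (i₂ : ℕ) = n + 1)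
    (hf : ∀ (i : Fin n) (x : Fin (n+2) → Bool),
      f x (Fin.castAdd 2 i) =
        ((φ' (fun j : Fin n => x (Fin.castAdd 2 j)) && ! x i₁) || x i₂))
    (T : Fin (n+2) → Option Bool) (hT : IsTrap f T)
    (h₁ : T i₁ = none) (h₂ : T i₂ = none) :
    ∀ i, T i = none := by
  have hne : i₁ ≠ i₂ := fun h => by simpa [hi₁, hi₂] using congrArg Fin.val h
  intro i
  induction i using Fin.addCases with
  | left j =>
    obtain ⟨x, hx, hx₁, hx₂⟩ := exists_mem_vset_apply_eq_apply_eq h₁ h₂ hne true false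
    obtain ⟨y, hy, -, hy₂⟩ := exists_mem_vset_apply_eq_apply_eq h₁ h₂ hne true true
    exact hT.eq_none_of_apply_ne hx hy (by simp [hf, hx₁, hx₂, hy₂])
  | right k =>
    fin_cases k
    · convert h₁ using 2; ext; simp [hi₁]
    · convert h₂ using 2; ext; simp [hi₂]
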